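/- arXiv:2206.09397 — 2 statements merged into one kernel-verified Lean document; each statement's English description precedes it below -/
import Mathlib

section
/- Let V satisfy the decrease condition with max, i.e. V(f(x,ν), f̂(x̂,ν)) ≤ max{γ V(x,x̂), ρ}. Then limsup over k of V(x(k), x̂(k)) along any synchronized trajectory pair is at most ρ; moreover if V(x(0), x̂(0)) > ρ then V(x(k), x̂(k)) ≤ ρ for all k ≥ ⌈log(ρ / V(x(0), x̂(0))) / log γ⌉. -/
/-!
Writing `u k = V (x k) (xh k)`, the decrease condition gives `u (k + 1) ≤ max (γ u k) ρ`, and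
since `γ ρ ≤ ρ` this iterates to `u k ≤ max (γ ^ k u 0) ρ`. The geometric term tends to `0`, which
bounds the limsup by `ρ`, and it drops below `ρ` as soon as `γ ^ k ≤ ρ / u 0`, i.e. once
`k ≥ log (ρ / u 0) / log γ` (the inequality flips because `log γ < 0`).
-/

open Filter

theorem le_max_pow_mul_of_le_max_mul {R : Type*} [Semiring R] [LinearOrder R] [IsOrderedRing R]
    {u : ℕ → R} {γ ρ : R} (hγ0 : 0 ≤ γ) (hγ1 : γ ≤ 1) (hρ : 0 ≤ ρ)
    (hu : ∀ k, u (k + 1) ≤ max (γ * u k) ρ) (k : ℕ) :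
    u k ≤ max (γ ^ k * u 0) ρ := by
  induction k with
  | zero => simp
  | succ n ih =>
    calc u (n + 1) ≤ max (γ * u n) ρ := hu n
      _ ≤ max (γ * max (γ ^ n * u 0) ρ) ρ := by gcongr
      _ = max (γ ^ (n + 1) * u 0) (max (γ * ρ) ρ) := by
        rw [mul_max_of_nonneg _ _ hγ0, max_assoc, pow_succ', mul_assoc]
      _ = max (γ ^ (n + 1) * u 0) ρ := by
        rw [max_eq_right (mul_le_of_le_one_left hρ hγ1)]

theorem limsup_le_of_le_max_mul {u : ℕ → ℝ} {γ ρ : ℝ} (hγ0 : 0 ≤ γ) (hγ1 : γ < 1) (hρ : 0 < ρ)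
    (hu0 : ∀ k, 0 ≤ u k) (hu : ∀ k, u (k + 1) ≤ max (γ * u k) ρ) :
    limsup u atTop ≤ ρ := by
  have hgeom : Tendsto (fun k ↦ γ ^ k * u 0) atTop (nhds 0) := by
    simpa using (tendsto_pow_atTop_nhds_zero_of_lt_one hγ0 hγ1).mul_const (u 0)
  refine limsup_le_of_le (isBoundedUnder_of ⟨0, hu0⟩).isCoboundedUnder_le ?_
  filter_upwards [hgeom.eventually_le_const hρ] with k hk
  exact (le_max_pow_mul_of_le_max_mul hγ0 hγ1.le hρ.le hu k).trans (max_le hk le_rfl)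

theorem pow_le_of_ceil_log_div_log_le {γ c : ℝ} (hγ0 : 0 < γ) (hγ1 : γ < 1) (hc : 0 < c)
    {k : ℕ} (hk : ⌈Real.log c / Real.log γ⌉ ≤ (k : ℤ)) : γ ^ k ≤ c := by
  have hk' : Real.log c / Real.log γ ≤ k := by exact_mod_cast Int.ceil_le.1 hk
  rw [div_le_iff_of_neg (Real.log_neg hγ0 hγ1)] at hk'
  rwa [← Real.log_le_log_iff (pow_pos hγ0 k) hc, Real.log_pow]

theorem abf_limsup_and_entry_time_general
    {X Xhat U : Type*}
    (f : X → U → X) (fhat : Xhat → U → Xhat) (V : X → Xhat → ℝ)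
    (γ ρ : ℝ) (hγ : 0 < γ) (hγ1 : γ < 1) (hρ : 0 < ρ)
    (hV : ∀ (x : X) (xh : Xhat), 0 ≤ V x xh)
    (hdec : ∀ (x : X) (xh : Xhat) (ν : U),
      V (f x ν) (fhat xh ν) ≤ max (γ * V x xh) ρ)
    (x : ℕ → X) (xh : ℕ → Xhat) (ν : ℕ → U)
    (hx : ∀ k, x (k + 1) = f (x k) (ν k))
    (hxh : ∀ k, xh (k + 1) = fhat (xh k) (ν k)) :
    limsup (fun k => V (x k) (xh k)) atTop ≤ ρ ∧
    (ρ < V (x 0) (xh 0) →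
      ∀ k : ℕ, (⌈Real.log (ρ / V (x 0) (xh 0)) / Real.log γ⌉ : ℤ) ≤ (k : ℤ) →
        V (x k) (xh k) ≤ ρ) := by
  set u : ℕ → ℝ := fun k ↦ V (x k) (xh k)
  have hstep (k : ℕ) : u (k + 1) ≤ max (γ * u k) ρ := by
    simp only [u, hx, hxh]
    exact hdec _ _ _
  refine ⟨limsup_le_of_le_max_mul hγ.le hγ1 hρ (fun k ↦ hV _ _) hstep, fun hρu k hk ↦ ?_⟩
  have hu0 : 0 < u 0 := hρ.trans hρu
  have hpow : γ ^ k ≤ ρ / u 0 := pow_le_of_ceil_log_div_log_le hγ hγ1 (div_pos hρ hu0) hk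
  refine (le_max_pow_mul_of_le_max_mul hγ.le hγ1.le hρ.le hstep k).trans (max_le ?_ le_rfl)
  calc γ ^ k * u 0 ≤ ρ / u 0 * u 0 := by gcongr
    _ = ρ := div_mul_cancel₀ ρ hu0.ne'

/-- The ABF decrease condition implies limsup_k V(x(k),xh(k)) ≤ ρ, and if
V(x(0),xh(0)) > ρ then V(x(k),xh(k)) ≤ ρ for all
k ≥ ⌈log(ρ / V(x(0),xh(0))) / log γ⌉. -/
theorem abf_limsup_and_entry_time
    {X Xhat U : Type*}
    (f : X → U → X) (fhat : Xhat → U → Xhat) (V : X → Xhat → ℝ)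
    (γ ρ : ℝ) (hγ : 0 < γ) (hγ1 : γ < 1) (hρ : 0 < ρ)
    (hV : ∀ (x : X) (xh : Xhat), 0 ≤ V x xh)
    (hdec : ∀ (x : X) (xh : Xhat) (ν : U),
      V (f x ν) (fhat xh ν) ≤ max (γ * V x xh) ρ)
    (x : ℕ → X) (xh : ℕ → Xhat) (ν : ℕ → U)
    (hx : ∀ k, x (k + 1) = f (x k) (ν k))
    (hxh : ∀ k, xh (k + 1) = fhat (xh k) (ν k))
    (h0pos : 0 < V (x 0) (xh 0)) :
    limsup (fun k => V (x k) (xh k)) atTop ≤ ρ ∧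
    (ρ < V (x 0) (xh 0) →
      ∀ k : ℕ, (⌈Real.log (ρ / V (x 0) (xh 0)) / Real.log γ⌉ : ℤ) ≤ (k : ℤ) →
        V (x k) (xh k) ≤ ρ) :=
  abf_limsup_and_entry_time_general f fhat V γ ρ hγ hγ1 hρ hV hdec x xh ν hx hxh
end

section
/- Suppose f(·, ν) is L_f-Lipschitz for every ν ∈ U, Q satisfies ‖Q(y) − y‖ ≤ δ, f̂(x̂, ν) = Q(f(x̂, ν)), P is symmetric positive definite with λ_max(P) L_f² ≤ γ̃ λ_min(P) for some γ̃ ∈ (0,1). Then V(x, x̂) = (x − x̂)ᵀ P (x − x̂) satisfies, for all x, x̂, ν: V(f(x,ν), f̂(x̂,ν)) ≤ (1+c) γ̃ V(x, x̂) + (1 + 1/c) λ_max(P) δ² for any c > 0. -/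
/-!
Split `f x ν - Q (f x̂ ν)` as the Lipschitz increment `f x ν - f x̂ ν` plus the quantization
error `f x̂ ν - Q (f x̂ ν)` and apply Young's inequality to the squared norm. Sandwiching the
quadratic form between `λ_min(P) ‖v‖²` and `λ_max(P) ‖v‖²` (the Loewner bounds
`λ_min • 1 ≤ P ≤ λ_max • 1`) and using `λ_max L_f² ≤ γ̃ λ_min` turns the first term into
`(1 + c) γ̃ V(x, x̂)` and the second into `(1 + 1/c) λ_max δ²`.
-/

open scoped MatrixOrder
open Matrix

theorem add_sq_le_one_add_mul_sq_add {x y c : ℝ} (hc : 0 < c) :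
    (x + y) ^ 2 ≤ (1 + c) * x ^ 2 + (1 + 1 / c) * y ^ 2 := by
  have key : (1 + c) * x ^ 2 + (1 + 1 / c) * y ^ 2 - (x + y) ^ 2 = (c * x - y) ^ 2 / c := by
    field_simp
    ring
  have : 0 ≤ (c * x - y) ^ 2 / c := by positivity
  linarith

theorem norm_add_sq_le_one_add_mul_norm_sq_add {E : Type*} [SeminormedAddCommGroup E]
    (a b : E) {c : ℝ} (hc : 0 < c) :
    ‖a + b‖ ^ 2 ≤ (1 + c) * ‖a‖ ^ 2 + (1 + 1 / c) * ‖b‖ ^ 2 :=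
  (pow_le_pow_left₀ (norm_nonneg _) (norm_add_le a b) 2).trans (add_sq_le_one_add_mul_sq_add hc)

theorem EuclideanSpace.dotProduct_ofLp_self {ι : Type*} [Fintype ι] (v : EuclideanSpace ℝ ι) :
    WithLp.ofLp v ⬝ᵥ WithLp.ofLp v = ‖v‖ ^ 2 := by
  rw [← real_inner_self_eq_norm_sq, EuclideanSpace.inner_eq_star_dotProduct, star_trivial]

namespace Matrix

variable {ι : Type*} [Fintype ι]

theorem dotProduct_mulVec_le_of_le {A B : Matrix ι ι ℝ} (h : A ≤ B) (v : ι → ℝ) :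
    v ⬝ᵥ A *ᵥ v ≤ v ⬝ᵥ B *ᵥ v := by
  have := (Matrix.le_iff.mp h).dotProduct_mulVec_nonneg v
  simpa [sub_mulVec, dotProduct_sub] using this

theorem dotProduct_algebraMap_mulVec [DecidableEq ι] (r : ℝ) (v : ι → ℝ) :
    v ⬝ᵥ algebraMap ℝ (Matrix ι ι ℝ) r *ᵥ v = r * (v ⬝ᵥ v) := by
  rw [Algebra.algebraMap_eq_smul_one, smul_mulVec, one_mulVec, dotProduct_smul, smul_eq_mul]

namespace IsHermitian

variable [DecidableEq ι] {A : Matrix ι ι ℝ} (hA : A.IsHermitian)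
include hA

theorem le_algebraMap_iSup_eigenvalues : A ≤ algebraMap ℝ _ (⨆ i, hA.eigenvalues i) := by
  rw [le_algebraMap_iff_spectrum_le hA.isSelfAdjoint, hA.spectrum_real_eq_range_eigenvalues]
  rintro _ ⟨i, rfl⟩
  exact le_ciSup (Set.finite_range _).bddAbove i

theorem algebraMap_iInf_eigenvalues_le : algebraMap ℝ _ (⨅ i, hA.eigenvalues i) ≤ A := by
  rw [algebraMap_le_iff_le_spectrum hA.isSelfAdjoint, hA.spectrum_real_eq_range_eigenvalues]
  rintro _ ⟨i, rfl⟩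
  exact ciInf_le (Set.finite_range _).bddBelow i

theorem dotProduct_mulVec_le_iSup_eigenvalues_mul (v : ι → ℝ) :
    v ⬝ᵥ A *ᵥ v ≤ (⨆ i, hA.eigenvalues i) * (v ⬝ᵥ v) :=
  dotProduct_algebraMap_mulVec (ι := ι) _ v ▸
    dotProduct_mulVec_le_of_le hA.le_algebraMap_iSup_eigenvalues v

theorem iInf_eigenvalues_mul_le_dotProduct_mulVec (v : ι → ℝ) :
    (⨅ i, hA.eigenvalues i) * (v ⬝ᵥ v) ≤ v ⬝ᵥ A *ᵥ v :=
  dotProduct_algebraMap_mulVec (ι := ι) _ v ▸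
    dotProduct_mulVec_le_of_le hA.algebraMap_iInf_eigenvalues_le v

end IsHermitian

end Matrix

theorem quadratic_abf_decrease_general
    {n : ℕ} {U : Type*}
    (f : EuclideanSpace ℝ (Fin n) → U → EuclideanSpace ℝ (Fin n))
    (Q : EuclideanSpace ℝ (Fin n) → EuclideanSpace ℝ (Fin n))
    (Lf δ γ' : ℝ) (hγ'0 : 0 < γ')
    (hlip : ∀ (ν : U), ∀ x y : EuclideanSpace ℝ (Fin n),
      ‖f x ν - f y ν‖ ≤ Lf * ‖x - y‖)
    (hQ : ∀ y : EuclideanSpace ℝ (Fin n), ‖Q y - y‖ ≤ δ)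
    (P : Matrix (Fin n) (Fin n) ℝ) (hP : P.IsHermitian) (hPpos : P.PosDef)
    (heig : (⨆ i, hP.eigenvalues i) * Lf ^ 2 ≤ γ' * ⨅ i, hP.eigenvalues i) :
    ∀ c : ℝ, 0 < c → ∀ (x xh : EuclideanSpace ℝ (Fin n)) (ν : U),
      dotProduct (WithLp.ofLp (f x ν - Q (f xh ν)))
          (P.mulVec (WithLp.ofLp (f x ν - Q (f xh ν)))) ≤
        (1 + c) * γ' * dotProduct (WithLp.ofLp (x - xh)) (P.mulVec (WithLp.ofLp (x - xh))) +
        (1 + 1 / c) * (⨆ i, hP.eigenvalues i) * δ ^ 2 := by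
  intro c hc x xh ν
  set lmax := ⨆ i, hP.eigenvalues i
  set lmin := ⨅ i, hP.eigenvalues i
  have hlmax : 0 ≤ lmax := Real.iSup_nonneg fun i ↦ (hPpos.eigenvalues_pos i).le
  have hquant : ‖f xh ν - Q (f xh ν)‖ ≤ δ := norm_sub_rev (Q (f xh ν)) _ ▸ hQ (f xh ν)
  have hsplit := norm_add_sq_le_one_add_mul_norm_sq_add (f x ν - f xh ν) (f xh ν - Q (f xh ν)) hc
  rw [sub_add_sub_cancel] at hsplit
  have hV := hP.iInf_eigenvalues_mul_le_dotProduct_mulVec (WithLp.ofLp (x - xh))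
  rw [EuclideanSpace.dotProduct_ofLp_self] at hV
  calc _ ≤ lmax * ‖f x ν - Q (f xh ν)‖ ^ 2 := by
        simpa only [EuclideanSpace.dotProduct_ofLp_self] using
          hP.dotProduct_mulVec_le_iSup_eigenvalues_mul (WithLp.ofLp (f x ν - Q (f xh ν)))
    _ ≤ lmax * ((1 + c) * (Lf * ‖x - xh‖) ^ 2 + (1 + 1 / c) * δ ^ 2) := by
        grw [hsplit, hlip ν x xh, hquant]
    _ = (1 + c) * (lmax * Lf ^ 2) * ‖x - xh‖ ^ 2 + (1 + 1 / c) * lmax * δ ^ 2 := by ring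
    _ ≤ (1 + c) * (γ' * lmin) * ‖x - xh‖ ^ 2 + (1 + 1 / c) * lmax * δ ^ 2 := by gcongr
    _ = (1 + c) * γ' * (lmin * ‖x - xh‖ ^ 2) + (1 + 1 / c) * lmax * δ ^ 2 := by ring
    _ ≤ _ := by gcongr

/-- If f(·,ν) is L_f-Lipschitz, Q is a δ-quantizer, f̂(x̂,ν) = Q(f(x̂,ν)), and
λ_max(P) L_f² ≤ γ̃ λ_min(P), then the quadratic form V(x,x̂) = (x−x̂)ᵀP(x−x̂)
satisfies V(f(x,ν), f̂(x̂,ν)) ≤ (1+c) γ̃ V(x,x̂) + (1+1/c) λ_max(P) δ² for any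
c > 0. -/
theorem quadratic_abf_decrease
    {n : ℕ} {U : Type*} (hn : 0 < n)
    (f : EuclideanSpace ℝ (Fin n) → U → EuclideanSpace ℝ (Fin n))
    (Q : EuclideanSpace ℝ (Fin n) → EuclideanSpace ℝ (Fin n))
    (Lf δ γ' : ℝ) (hLf : 0 ≤ Lf) (hδ : 0 ≤ δ) (hγ'0 : 0 < γ') (hγ'1 : γ' < 1)
    (hlip : ∀ (ν : U), ∀ x y : EuclideanSpace ℝ (Fin n),
      ‖f x ν - f y ν‖ ≤ Lf * ‖x - y‖)
    (hQ : ∀ y : EuclideanSpace ℝ (Fin n), ‖Q y - y‖ ≤ δ)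
    (P : Matrix (Fin n) (Fin n) ℝ) (hP : P.IsHermitian) (hPpos : P.PosDef)
    (heig : (⨆ i, hP.eigenvalues i) * Lf ^ 2 ≤ γ' * ⨅ i, hP.eigenvalues i) :
    ∀ c : ℝ, 0 < c → ∀ (x xh : EuclideanSpace ℝ (Fin n)) (ν : U),
      dotProduct (WithLp.ofLp (f x ν - Q (f xh ν)))
          (P.mulVec (WithLp.ofLp (f x ν - Q (f xh ν)))) ≤
        (1 + c) * γ' * dotProduct (WithLp.ofLp (x - xh)) (P.mulVec (WithLp.ofLp (x - xh))) +
        (1 + 1 / c) * (⨆ i, hP.eigenvalues i) * δ ^ 2 :=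
  quadratic_abf_decrease_general f Q Lf δ γ' hγ'0 hlip hQ P hP hPpos heig
end
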